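/- arXiv:2307.15708 — 3 statements merged into one kernel-verified Lean document; each statement's English description precedes it below -/
import Mathlib

section
/- Let ρ be a d×d density matrix and {M_i} a family of orthogonal projections with M_i M_j = δ_{ij} M_i and Σ_i M_i = 𝟙. Then S(Σ_i M_i ρ M_i) ≥ S(ρ), where S is the von Neumann entropy. -/
/-!
Diagonalize `ρ = U diag(p) Uᴴ` and the pinched state `σ = W diag(q) Wᴴ`. With `Aᵢ = Wᴴ Mᵢ U`,
`diag(q) = ∑ᵢ Aᵢ diag(p) Aᵢᴴ`, so `q = B p` for `B j k = ∑ᵢ |(Aᵢ) j k|²`. Since the `Aᵢ` satisfy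
`∑ Aᵢ Aᵢᴴ = 1 = ∑ Aᵢᴴ Aᵢ`, the matrix `B` is doubly stochastic, and Jensen's inequality for the
convex function `x ↦ x log x` applied row by row gives `∑ q log q ≤ ∑ p log p`. The argument works
verbatim for any unital trace-preserving channel `ρ ↦ ∑ Kᵢ ρ Kᵢᴴ`, of which the pinching is one.
-/

open Matrix
open scoped ComplexOrder

/-- The von Neumann entropy of a Hermitian matrix, −tr(ρ log ρ), computed via eigenvalues. -/
noncomputable def vonNeumannEntropy {d : ℕ} (ρ : Matrix (Fin d) (Fin d) ℂ)
    (h : ρ.IsHermitian) : ℝ :=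
  -∑ i, h.eigenvalues i * Real.log (h.eigenvalues i)

open Finset

theorem ConvexOn.sum_mulVec_le_of_mem_doublyStochastic {n : Type*} [Fintype n] [DecidableEq n]
    {s : Set ℝ} {f : ℝ → ℝ} (hf : ConvexOn ℝ s f) {B : Matrix n n ℝ}
    (hB : B ∈ doublyStochastic ℝ n) {p : n → ℝ} (hp : ∀ k, p k ∈ s) :
    ∑ j, f ((B *ᵥ p) j) ≤ ∑ k, f (p k) :=
  calc ∑ j, f ((B *ᵥ p) j) ≤ ∑ j, ∑ k, B j k * f (p k) :=
        sum_le_sum fun j _ => by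
          simpa only [mulVec, dotProduct, smul_eq_mul] using
            hf.map_sum_le (fun k _ => nonneg_of_mem_doublyStochastic hB)
              (sum_row_of_mem_doublyStochastic hB j) fun k _ => hp k
    _ = ∑ k, f (p k) := by
        rw [sum_comm]
        simp only [← sum_mul, sum_col_of_mem_doublyStochastic hB, one_mul]

namespace Matrix

variable {ι n 𝕜 : Type*} [Fintype ι] [Fintype n] [DecidableEq n] [RCLike 𝕜]

/-- Kraus operators of a unital trace-preserving channel `ρ ↦ ∑ i, K i * ρ * (K i)ᴴ`. -/
def IsBistochastic (K : ι → Matrix n n 𝕜) : Prop :=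
  ∑ i, K i * (K i)ᴴ = 1 ∧ ∑ i, (K i)ᴴ * K i = 1

theorem IsBistochastic.unitary_conj {K : ι → Matrix n n 𝕜} (hK : IsBistochastic K)
    {U W : Matrix n n 𝕜} (hU : U ∈ unitaryGroup n 𝕜) (hW : W ∈ unitaryGroup n 𝕜) :
    IsBistochastic fun i => Wᴴ * K i * U := by
  have hU₁ : U * Uᴴ = 1 := mem_unitaryGroup_iff.mp hU
  have hU₂ : Uᴴ * U = 1 := mem_unitaryGroup_iff'.mp hU
  have hW₁ : W * Wᴴ = 1 := mem_unitaryGroup_iff.mp hW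
  have hW₂ : Wᴴ * W = 1 := mem_unitaryGroup_iff'.mp hW
  constructor
  · calc ∑ i, Wᴴ * K i * U * (Wᴴ * K i * U)ᴴ = Wᴴ * (∑ i, K i * (K i)ᴴ) * W := by
          simp only [mul_sum, sum_mul, conjTranspose_mul, conjTranspose_conjTranspose,
            Matrix.mul_assoc]
          simp only [← Matrix.mul_assoc U, hU₁, Matrix.one_mul]
      _ = 1 := by rw [hK.1, Matrix.mul_one, hW₂]
  · calc ∑ i, (Wᴴ * K i * U)ᴴ * (Wᴴ * K i * U) = Uᴴ * (∑ i, (K i)ᴴ * K i) * U := by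
          simp only [mul_sum, sum_mul, conjTranspose_mul, conjTranspose_conjTranspose,
            Matrix.mul_assoc]
          simp only [← Matrix.mul_assoc W, hW₁, Matrix.one_mul]
      _ = 1 := by rw [hK.2, Matrix.mul_one, hU₂]

def normSqMatrix (K : ι → Matrix n n 𝕜) : Matrix n n ℝ :=
  of fun j k => ∑ i, ‖K i j k‖ ^ 2

theorem IsBistochastic.normSqMatrix_mem_doublyStochastic {K : ι → Matrix n n 𝕜}
    (hK : IsBistochastic K) : normSqMatrix K ∈ doublyStochastic ℝ n := by
  refine mem_doublyStochastic_iff_sum.mpr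
    ⟨fun j k => sum_nonneg fun i _ => sq_nonneg _, fun j => ?_, fun k => ?_⟩
  · have hjj := congr_fun₂ hK.1 j j
    simp only [sum_apply, mul_apply, conjTranspose_apply, RCLike.star_def, RCLike.mul_conj,
      one_apply_eq] at hjj
    rw [sum_comm] at hjj
    exact_mod_cast hjj
  · have hkk := congr_fun₂ hK.2 k k
    simp only [sum_apply, mul_apply, conjTranspose_apply, RCLike.star_def, RCLike.conj_mul,
      one_apply_eq] at hkk
    rw [sum_comm] at hkk
    exact_mod_cast hkk

theorem sum_mul_diagonal_mul_conjTranspose_apply_self (K : ι → Matrix n n 𝕜) (p : n → ℝ)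
    (j : n) :
    (∑ i, K i * diagonal (RCLike.ofReal ∘ p) * (K i)ᴴ : Matrix n n 𝕜) j j =
      ((normSqMatrix K *ᵥ p) j : 𝕜) := by
  simp only [sum_apply, mul_apply, diagonal_apply, Function.comp_apply, mul_ite, mul_zero,
    sum_ite_eq', mem_univ, ↓reduceIte, conjTranspose_apply, RCLike.star_def,
    mul_right_comm _ (RCLike.ofReal _), RCLike.mul_conj, mulVec, dotProduct, normSqMatrix,
    of_apply, sum_mul, map_sum, map_mul, map_pow]
  rw [sum_comm]

theorem IsBistochastic.exists_mem_doublyStochastic_eigenvalues_eq_mulVec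
    {K : ι → Matrix n n 𝕜} (hK : IsBistochastic K) {ρ σ : Matrix n n 𝕜} (hρ : ρ.IsHermitian)
    (hσ : σ.IsHermitian) (hσρ : σ = ∑ i, K i * ρ * (K i)ᴴ) :
    ∃ B ∈ doublyStochastic ℝ n, hσ.eigenvalues = B *ᵥ hρ.eigenvalues := by
  obtain ⟨U, hU, hρU⟩ : ∃ U ∈ unitaryGroup n 𝕜,
      ρ = U * diagonal (RCLike.ofReal ∘ hρ.eigenvalues) * Uᴴ :=
    ⟨_, hρ.eigenvectorUnitary.2, hρ.spectral_theorem⟩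
  obtain ⟨W, hW, hσW⟩ : ∃ W ∈ unitaryGroup n 𝕜,
      Wᴴ * σ * W = diagonal (RCLike.ofReal ∘ hσ.eigenvalues) :=
    ⟨_, hσ.eigenvectorUnitary.2, by
      simpa only [Unitary.conjStarAlgAut_apply, Unitary.coe_star, star_eq_conjTranspose,
          conjTranspose_conjTranspose]
        using hσ.conjStarAlgAut_star_eigenvectorUnitary⟩
  set A := fun i => Wᴴ * K i * U
  refine ⟨normSqMatrix A, (hK.unitary_conj hU hW).normSqMatrix_mem_doublyStochastic,
    funext fun j => ?_⟩
  have hdiag : diagonal (RCLike.ofReal ∘ hσ.eigenvalues) =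
      ∑ i, A i * diagonal (RCLike.ofReal ∘ hρ.eigenvalues) * (A i)ᴴ := by
    rw [← hσW]
    conv_lhs => rw [hσρ, hρU]
    simp only [A, mul_sum, sum_mul, conjTranspose_mul, conjTranspose_conjTranspose,
      Matrix.mul_assoc]
  have hjj := congr_fun₂ hdiag j j
  rw [sum_mul_diagonal_mul_conjTranspose_apply_self, diagonal_apply_eq,
    Function.comp_apply] at hjj
  exact_mod_cast hjj

end Matrix

theorem vonNeumannEntropy_le_of_isBistochastic {d : ℕ} {ι : Type*} [Fintype ι]
    {ρ σ : Matrix (Fin d) (Fin d) ℂ} (hρ : ρ.PosSemidef) (hσ : σ.IsHermitian)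
    {K : ι → Matrix (Fin d) (Fin d) ℂ} (hK : IsBistochastic K)
    (hσρ : σ = ∑ i, K i * ρ * (K i)ᴴ) :
    vonNeumannEntropy ρ hρ.1 ≤ vonNeumannEntropy σ hσ := by
  obtain ⟨B, hB, hqp⟩ := hK.exists_mem_doublyStochastic_eigenvalues_eq_mulVec hρ.1 hσ hσρ
  rw [vonNeumannEntropy, vonNeumannEntropy, neg_le_neg_iff, hqp]
  exact Real.convexOn_mul_log.sum_mulVec_le_of_mem_doublyStochastic hB hρ.eigenvalues_nonneg

theorem stmt_10_general {d : ℕ} {ι : Type} [Fintype ι] [DecidableEq ι]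
    (ρ : Matrix (Fin d) (Fin d) ℂ) (hρ : ρ.PosSemidef)
    (M : ι → Matrix (Fin d) (Fin d) ℂ)
    (hherm : ∀ i, (M i).IsHermitian)
    (hproj : ∀ i j, M i * M j = if i = j then M i else 0)
    (hsum : ∑ i, M i = 1)
    (hpinch : (∑ i, M i * ρ * M i).IsHermitian) :
    vonNeumannEntropy ρ hρ.1 ≤ vonNeumannEntropy (∑ i, M i * ρ * M i) hpinch := by
  have hidem : ∀ i, M i * M i = M i := fun i => by rw [hproj, if_pos rfl]
  have hM : IsBistochastic M := by
    simp only [IsBistochastic, (hherm _).eq, hidem, hsum, and_self]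
  exact vonNeumannEntropy_le_of_isBistochastic hρ hpinch hM (by simp only [(hherm _).eq])

theorem stmt_10 {d : ℕ} {ι : Type} [Fintype ι] [DecidableEq ι]
    (ρ : Matrix (Fin d) (Fin d) ℂ) (hρ : ρ.PosSemidef) (htr : ρ.trace = 1)
    (M : ι → Matrix (Fin d) (Fin d) ℂ)
    (hherm : ∀ i, (M i).IsHermitian)
    (hproj : ∀ i j, M i * M j = if i = j then M i else 0)
    (hsum : ∑ i, M i = 1)
    (hpinch : (∑ i, M i * ρ * M i).IsHermitian) :
    vonNeumannEntropy ρ hρ.1 ≤ vonNeumannEntropy (∑ i, M i * ρ * M i) hpinch :=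
  stmt_10_general ρ hρ M hherm hproj hsum hpinch
end

section
/- There is no orthonormal basis of ℂ²⊗ℂ² consisting of product states that is mutually unbiased to the orthonormal basis {|00⟩, (|01⟩+|10⟩+|11⟩)/√3, (|01⟩+ω|10⟩+ω²|11⟩)/√3, (|01⟩+ω²|10⟩+ω|11⟩)/√3}, where ω = e^{2πi/3}. -/
/-!
Write `φ j = a j ⊗ A j`. Unbiasedness to `|00⟩` gives `|a j 0 * A j 0|² = 1/4`, and unbiasedness
to the three Fourier-type vectors says that the cyclic correlation `x̄y + ȳz + z̄x` of the remaining
coordinates `(x, y, z) = (φ j (0,1), φ j (1,0), φ j (1,1))` vanishes. Orthogonality of `φ 0` to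
`φ 1, φ 2, φ 3` makes, for each `k`, either `a 0 ⊥ a k` or `A 0 ⊥ A k`; by pigeonhole two of them,
say `a j` and `a k`, are orthogonal to `a 0`, hence parallel in `ℂ²`, and then `A j ⊥ A k`.
After rescaling, `φ j = a ⊗ A` and `φ k = a ⊗ B` with `B` a unimodular multiple of
`A^⊥ = (-Ā₁, Ā₀)`. Adding the two cyclic-correlation equations gives `ā₁ a₀ ‖A‖² = 0`, whereas
the normalisations force `|a₁| = |a₀| ≠ 0`.
-/

open Matrix
open scoped ComplexOrder

noncomputable def omg : ℂ := Complex.exp (2 * Real.pi * Complex.I / 3)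

/-- The two-qubit basis {|00⟩, (|01⟩+|10⟩+|11⟩)/√3, (|01⟩+ω|10⟩+ω²|11⟩)/√3,
(|01⟩+ω²|10⟩+ω|11⟩)/√3}. -/
noncomputable def entBasis : Fin 4 → (Fin 2 × Fin 2 → ℂ) :=
  ![fun p => if p = (0, 0) then 1 else 0,
    fun p => if p = (0, 0) then 0 else ((Real.sqrt 3 : ℂ))⁻¹,
    fun p => ((Real.sqrt 3 : ℂ))⁻¹ *
      (if p = (0, 1) then 1 else if p = (1, 0) then omg else if p = (1, 1) then omg ^ 2 else 0),
    fun p => ((Real.sqrt 3 : ℂ))⁻¹ *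
      (if p = (0, 1) then 1 else if p = (1, 0) then omg ^ 2 else if p = (1, 1) then omg else 0)]

open Complex ComplexConjugate

namespace IsPrimitiveRoot

variable {ζ : ℂ}

lemma sq_add_self_add_one (hζ : IsPrimitiveRoot ζ 3) : ζ ^ 2 + ζ + 1 = 0 := by
  have h := hζ.geom_sum_eq_zero (by norm_num)
  simp only [Finset.sum_range_succ, Finset.sum_range_zero] at h
  linear_combination h

lemma conj_eq_sq (hζ : IsPrimitiveRoot ζ 3) : conj ζ = ζ ^ 2 := by
  rw [← inv_eq_conj (hζ.norm'_eq_one (by norm_num)), inv_eq_of_mul_eq_one_right]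
  rw [← pow_succ', hζ.pow_eq_one]

lemma sq_ne_self (hζ : IsPrimitiveRoot ζ 3) : ζ ^ 2 ≠ ζ := by
  intro h
  rcases mul_eq_zero.1 (show ζ * (ζ - 1) = 0 by linear_combination h) with h0 | h1
  · exact hζ.ne_zero (by norm_num) h0
  · exact hζ.ne_one (by norm_num) (sub_eq_zero.1 h1)

end IsPrimitiveRoot

lemma isPrimitiveRoot_conj_omg : IsPrimitiveRoot (conj omg) 3 := by
  simpa [omg] using
    (isPrimitiveRoot_exp 3 (by norm_num)).map_of_injective (RingHom.injective (starRingEnd ℂ))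

lemma conj_mul_self_eq_of_norm_eq {u w : ℂ} (h : ‖u‖ = ‖w‖) : conj u * u = conj w * w := by
  rw [← normSq_eq_conj_mul_self, ← normSq_eq_conj_mul_self, normSq_eq_norm_sq, h,
    normSq_eq_norm_sq]

/-- The three squared moduli of the discrete Fourier transform of `(x, y, z)` are
`N + 2 Re (ζ ^ k * S)` with `S = x̄y + ȳz + z̄x`, so they agree only if `S = 0`. -/
lemma cyclic_sum_eq_zero_of_norm_eq {ζ : ℂ} (hζ : IsPrimitiveRoot ζ 3) {x y z : ℂ}
    (h₁ : ‖x + ζ * y + ζ ^ 2 * z‖ = ‖x + y + z‖) (h₂ : ‖x + ζ ^ 2 * y + ζ * z‖ = ‖x + y + z‖) :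
    conj x * y + conj y * z + conj z * x = 0 := by
  have e₁ := conj_mul_self_eq_of_norm_eq h₁
  have e₂ := conj_mul_self_eq_of_norm_eq h₂
  have h3 := hζ.pow_eq_one
  have hp4 : (ζ ^ 2) ^ 2 = ζ := by linear_combination ζ * h3
  simp only [map_add, map_mul, map_pow, hζ.conj_eq_sq, hp4] at e₁ e₂
  have hS : conj x * y + conj y * z + conj z * x = conj y * x + conj z * y + conj x * z := by
    have h : (ζ ^ 2 - ζ) * ((conj x * y + conj y * z + conj z * x)
        - (conj y * x + conj z * y + conj x * z)) = 0 := by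
      linear_combination -(e₁ - e₂) + (ζ * conj y * z - ζ * conj z * y) * h3
    exact sub_eq_zero.1 ((mul_eq_zero.1 h).resolve_left (sub_ne_zero.2 hζ.sq_ne_self))
  have h3S : (3 : ℂ) * (conj x * y + conj y * z + conj z * x) = 0 := by
    linear_combination -e₁ + (conj x * y + conj y * z + conj z * x) * hζ.sq_add_self_add_one
      + (1 - ζ ^ 2) * hS + (conj y * y + conj z * z + ζ * conj y * z) * h3
  exact (mul_eq_zero.1 h3S).resolve_left three_ne_zero

lemma star_dotProduct_fin_two (a b : Fin 2 → ℂ) :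
    star a ⬝ᵥ b = conj (a 0) * b 0 + conj (a 1) * b 1 := by
  simp [dotProduct, Fin.sum_univ_two]

lemma star_dotProduct_self_fin_two (a : Fin 2 → ℂ) :
    star a ⬝ᵥ a = (normSq (a 0) + normSq (a 1) : ℝ) := by
  simp [dotProduct, Fin.sum_univ_two, normSq_eq_conj_mul_self]

def perpVec (A : Fin 2 → ℂ) : Fin 2 → ℂ := ![-conj (A 1), conj (A 0)]

lemma eq_smul_perpVec_of_dotProduct_eq_zero {A B : Fin 2 → ℂ} (hA : A 0 ≠ 0)
    (h : star A ⬝ᵥ B = 0) : B = (B 1 / conj (A 0)) • perpVec A := by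
  have hA' : conj (A 0) ≠ 0 := (map_ne_zero _).2 hA
  rw [star_dotProduct_fin_two] at h
  ext i
  fin_cases i
  · simp only [Fin.zero_eta, perpVec, Pi.smul_apply, cons_val_zero, smul_eq_mul, mul_neg]
    field_simp
    linear_combination h
  · simp [perpVec, hA']

lemma exists_smul_eq_of_dotProduct_eq_zero {p a b : Fin 2 → ℂ} (hp : p 0 ≠ 0) (ha : a ≠ 0)
    (hpa : star p ⬝ᵥ a = 0) (hpb : star p ⬝ᵥ b = 0) : ∃ c : ℂ, b = c • a := by
  have ha' := eq_smul_perpVec_of_dotProduct_eq_zero hp hpa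
  have hb' := eq_smul_perpVec_of_dotProduct_eq_zero hp hpb
  generalize a 1 / conj (p 0) = α at ha'
  generalize b 1 / conj (p 0) = β at hb'
  subst ha' hb'
  have hα : α ≠ 0 := by rintro rfl; simp at ha
  exact ⟨β / α, by rw [smul_smul, div_mul_cancel₀ _ hα]⟩

section Tensor

variable {R ι κ : Type*}

def tensorVec [Mul R] (a : ι → R) (A : κ → R) : ι × κ → R := fun p => a p.1 * A p.2

lemma star_tensorVec_dotProduct [CommSemiring R] [StarRing R] [Fintype ι] [Fintype κ]
    (a b : ι → R) (A B : κ → R) :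
    star (tensorVec a A) ⬝ᵥ tensorVec b B = (star a ⬝ᵥ b) * (star A ⬝ᵥ B) := by
  simp only [dotProduct, Fintype.sum_prod_type, Finset.sum_mul_sum, tensorVec, Pi.star_apply,
    star_mul']
  refine Finset.sum_congr rfl fun i _ => Finset.sum_congr rfl fun j _ => by ring

lemma tensorVec_smul_left [CommSemigroup R] (c : R) (a : ι → R) (A : κ → R) :
    tensorVec (c • a) A = tensorVec a (c • A) := by
  ext p
  simp only [tensorVec, Pi.smul_apply, smul_eq_mul]
  ac_rfl

lemma tensorVec_comp_swap [CommMagma R] (a : ι → R) (A : κ → R) :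
    tensorVec a A ∘ Prod.swap = tensorVec A a :=
  funext fun _ => mul_comm _ _

end Tensor

lemma star_entBasis_dotProduct (v : Fin 2 × Fin 2 → ℂ) :
    star (entBasis 0) ⬝ᵥ v = v (0, 0) ∧
    star (entBasis 1) ⬝ᵥ v = (Real.sqrt 3 : ℂ)⁻¹ * (v (0, 1) + v (1, 0) + v (1, 1)) ∧
    star (entBasis 2) ⬝ᵥ v =
      (Real.sqrt 3 : ℂ)⁻¹ * (v (0, 1) + conj omg * v (1, 0) + conj omg ^ 2 * v (1, 1)) ∧
    star (entBasis 3) ⬝ᵥ v =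
      (Real.sqrt 3 : ℂ)⁻¹ * (v (0, 1) + conj omg ^ 2 * v (1, 0) + conj omg * v (1, 1)) := by
  refine ⟨?_, ?_, ?_, ?_⟩ <;>
  simp only [entBasis, dotProduct, Fintype.sum_prod_type, Fin.sum_univ_two, Prod.ext_iff,
      Pi.star_apply, RCLike.star_def, cons_val, cons_val_zero, cons_val_one, mul_ite,
      mul_one, one_mul, mul_zero, zero_mul, and_true, and_false, one_ne_zero, zero_ne_one,
      ↓reduceIte, map_zero, map_one, map_mul, map_pow, map_inv₀, conj_ofReal, add_zero, zero_add] <;>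
  ring

/-- For a unit vector these conditions are equivalent to being unbiased to `entBasis`. -/
structure UnbiasedConstraints (v : Fin 2 × Fin 2 → ℂ) : Prop where
  star_dotProduct_self : star v ⬝ᵥ v = 1
  normSq_apply_zero_zero : normSq (v (0, 0)) = 1 / 4
  cyclic_sum_eq_zero :
    conj (v (0, 1)) * v (1, 0) + conj (v (1, 0)) * v (1, 1) + conj (v (1, 1)) * v (0, 1) = 0

lemma unbiasedConstraints_of_unbiased {v : Fin 2 × Fin 2 → ℂ} (hv : star v ⬝ᵥ v = 1)
    (h : ∀ k, ‖star (entBasis k) ⬝ᵥ v‖ ^ 2 = 1 / 4) : UnbiasedConstraints v := by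
  obtain ⟨h₀, h₁, h₂, h₃⟩ := star_entBasis_dotProduct v
  have hnorm {w w' : ℂ} (hw : ‖(Real.sqrt 3 : ℂ)⁻¹ * w‖ ^ 2 = 1 / 4)
      (hw' : ‖(Real.sqrt 3 : ℂ)⁻¹ * w'‖ ^ 2 = 1 / 4) : ‖w‖ = ‖w'‖ := by
    rw [← hw', sq_eq_sq₀ (norm_nonneg _) (norm_nonneg _), norm_mul, norm_mul] at hw
    exact mul_left_cancel₀ (by simp) hw
  refine ⟨hv, by rw [normSq_eq_norm_sq, ← h₀, h 0], ?_⟩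
  have e₁ := h₁ ▸ h 1
  exact cyclic_sum_eq_zero_of_norm_eq isPrimitiveRoot_conj_omg (hnorm (h₂ ▸ h 2) e₁)
    (hnorm (h₃ ▸ h 3) e₁)

namespace UnbiasedConstraints

variable {v : Fin 2 × Fin 2 → ℂ}

lemma apply_zero_zero_ne_zero (hv : UnbiasedConstraints v) : v (0, 0) ≠ 0 := by
  intro h
  simpa [h] using hv.normSq_apply_zero_zero

lemma comp_swap (hv : UnbiasedConstraints v) : UnbiasedConstraints (v ∘ Prod.swap) where
  star_dotProduct_self := by
    rw [← hv.star_dotProduct_self]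
    exact Equiv.sum_comp (Equiv.prodComm _ _) fun p => star (v p) * v p
  normSq_apply_zero_zero := hv.normSq_apply_zero_zero
  cyclic_sum_eq_zero := by
    have h := congrArg conj hv.cyclic_sum_eq_zero
    simp only [map_add, map_mul, conj_conj, map_zero] at h
    simp only [Function.comp_apply, Prod.swap_prod_mk]
    linear_combination h

end UnbiasedConstraints

lemma false_of_unbiasedConstraints_tensorVec_common_left {a A B : Fin 2 → ℂ}
    (hAB : star A ⬝ᵥ B = 0) (hA : UnbiasedConstraints (tensorVec a A))
    (hB : UnbiasedConstraints (tensorVec a B)) : False := by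
  obtain ⟨ha₀, hA₀⟩ := mul_ne_zero_iff.1 hA.apply_zero_zero_ne_zero
  have hB' := eq_smul_perpVec_of_dotProduct_eq_zero hA₀ hAB
  generalize B 1 / conj (A 0) = c at hB'
  subst hB'
  have nA := hA.star_dotProduct_self
  have nB := hB.star_dotProduct_self
  have zA := hA.normSq_apply_zero_zero
  have zB := hB.normSq_apply_zero_zero
  have cA := hA.cyclic_sum_eq_zero
  have cB := hB.cyclic_sum_eq_zero
  simp only [star_tensorVec_dotProduct, star_dotProduct_self_fin_two] at nA nB
  simp only [tensorVec, perpVec, Pi.smul_apply, smul_eq_mul, cons_val_zero, cons_val_one,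
    cons_val_fin_one, mul_neg, normSq_neg, normSq_conj, ofReal_add, ofReal_mul, map_mul,
    map_neg, conj_conj, neg_mul] at nB zA zB cA cB
  have nA' : (normSq (a 0) + normSq (a 1)) * (normSq (A 0) + normSq (A 1)) = 1 := by
    exact_mod_cast nA
  have nB' : (normSq (a 0) + normSq (a 1)) * (normSq c * normSq (A 1) + normSq c * normSq (A 0))
      = 1 := by
    exact_mod_cast nB
  have hc : normSq c = 1 := by linear_combination nB' - normSq c * nA'
  have ha₁ : a 1 ≠ 0 := by
    intro h
    rw [h, map_zero, add_zero] at nA'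
    rw [hc, one_mul] at zB
    linarith [mul_add (normSq (a 0)) (normSq (A 0)) (normSq (A 1))]
  have hcc : conj c * c = 1 := by rw [← normSq_eq_conj_mul_self, hc, ofReal_one]
  have key : conj (a 1) * a 0 * ((normSq (A 0) + normSq (A 1) : ℝ) : ℂ) = 0 := by
    push_cast [normSq_eq_conj_mul_self]
    linear_combination cA + cB - (-(conj (a 0) * a 1 * A 0 * conj (A 1))
      - conj (a 1) * a 1 * A 1 * conj (A 0) + conj (a 1) * a 0 * A 0 * conj (A 0)) * hcc
  have hY : ((normSq (A 0) + normSq (A 1) : ℝ) : ℂ) ≠ 0 :=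
    ofReal_ne_zero.2 (right_ne_zero_of_mul_eq_one nA')
  exact mul_ne_zero (mul_ne_zero ((map_ne_zero _).2 ha₁) ha₀) hY key

lemma false_of_unbiasedConstraints_tensorVec_left_perp {p a A b B : Fin 2 → ℂ}
    (hp : p 0 ≠ 0) (hpa : star p ⬝ᵥ a = 0) (hpb : star p ⬝ᵥ b = 0)
    (hv : UnbiasedConstraints (tensorVec a A)) (hw : UnbiasedConstraints (tensorVec b B))
    (horth : star (tensorVec a A) ⬝ᵥ tensorVec b B = 0) : False := by
  have ha : a ≠ 0 := fun h => hv.apply_zero_zero_ne_zero (by simp [tensorVec, h])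
  obtain ⟨c, rfl⟩ := exists_smul_eq_of_dotProduct_eq_zero hp ha hpa hpb
  rw [tensorVec_smul_left] at hw horth
  rw [star_tensorVec_dotProduct] at horth
  have haa : star a ⬝ᵥ a ≠ 0 :=
    left_ne_zero_of_mul_eq_one (star_tensorVec_dotProduct a a A A ▸ hv.star_dotProduct_self)
  exact false_of_unbiasedConstraints_tensorVec_common_left
    ((mul_eq_zero.1 horth).resolve_left haa) hv hw

lemma false_of_unbiasedConstraints_tensorVec_right_perp {P a A b B : Fin 2 → ℂ}
    (hP : P 0 ≠ 0) (hPA : star P ⬝ᵥ A = 0) (hPB : star P ⬝ᵥ B = 0)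
    (hv : UnbiasedConstraints (tensorVec a A)) (hw : UnbiasedConstraints (tensorVec b B))
    (horth : star (tensorVec a A) ⬝ᵥ tensorVec b B = 0) : False := by
  rw [star_tensorVec_dotProduct, mul_comm, ← star_tensorVec_dotProduct] at horth
  exact false_of_unbiasedConstraints_tensorVec_left_perp hP hPA hPB
    (tensorVec_comp_swap a A ▸ hv.comp_swap) (tensorVec_comp_swap b B ▸ hw.comp_swap) horth

/-- There is no orthonormal basis of ℂ²⊗ℂ² consisting of product states that is mutually
unbiased to `entBasis`. -/
theorem stmt_16 :
    ¬ ∃ φ : Fin 4 → (Fin 2 × Fin 2 → ℂ),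
      (∀ j, ∃ a A : Fin 2 → ℂ, φ j = fun p => a p.1 * A p.2) ∧
      (∀ j j', star (φ j) ⬝ᵥ φ j' = if j = j' then 1 else 0) ∧
      (∀ k j, ‖star (entBasis k) ⬝ᵥ φ j‖ ^ 2 = 1 / 4) := by
  rintro ⟨φ, hprod, hON, hmu⟩
  choose a A hφ using hprod
  replace hφ (j : Fin 4) : φ j = tensorVec (a j) (A j) := hφ j
  have hc (j : Fin 4) : UnbiasedConstraints (tensorVec (a j) (A j)) :=
    hφ j ▸ unbiasedConstraints_of_unbiased (by simpa using hON j j) (hmu · j)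
  have horth (j k : Fin 4) (hjk : j ≠ k) :
      star (tensorVec (a j) (A j)) ⬝ᵥ tensorVec (a k) (A k) = 0 := by
    simpa [hjk, hφ] using hON j k
  obtain ⟨ha, hA⟩ := mul_ne_zero_iff.1 (hc 0).apply_zero_zero_ne_zero
  have hsplit (k : Fin 4) (hk : k ≠ 0) : star (a 0) ⬝ᵥ a k = 0 ∨ star (A 0) ⬝ᵥ A k = 0 :=
    mul_eq_zero.1 (star_tensorVec_dotProduct (a 0) (a k) (A 0) (A k) ▸ horth 0 k hk.symm)
  have hleft (j k : Fin 4) (hjk : j ≠ k) (hj : star (a 0) ⬝ᵥ a j = 0)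
      (hk : star (a 0) ⬝ᵥ a k = 0) : False :=
    false_of_unbiasedConstraints_tensorVec_left_perp ha hj hk (hc j) (hc k) (horth j k hjk)
  have hright (j k : Fin 4) (hjk : j ≠ k) (hj : star (A 0) ⬝ᵥ A j = 0)
      (hk : star (A 0) ⬝ᵥ A k = 0) : False :=
    false_of_unbiasedConstraints_tensorVec_right_perp hA hj hk (hc j) (hc k) (horth j k hjk)
  rcases hsplit 1 (by decide) with h₁ | h₁ <;> rcases hsplit 2 (by decide) with h₂ | h₂ <;>
    rcases hsplit 3 (by decide) with h₃ | h₃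
  all_goals first
    | exact hleft 1 2 (by decide) h₁ h₂ | exact hleft 1 3 (by decide) h₁ h₃
    | exact hleft 2 3 (by decide) h₂ h₃ | exact hright 1 2 (by decide) h₁ h₂
    | exact hright 1 3 (by decide) h₁ h₃ | exact hright 2 3 (by decide) h₂ h₃
end

section
/- Let ρ be a positive definite d×d density matrix and {m_i}_{i=1}^d an orthonormal basis with ⟨m_i, √ρ m_i⟩ = (tr √ρ)/d for all i. Then Σ_i |⟨m_i, √ρ m_i⟩|² = (tr √ρ)²/d, and for any other orthonormal basis {e_i}, Σ_i |⟨m_i, √ρ e_i⟩|² ≤ (tr √ρ)²/d. -/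
/-!
Since `√ρ` is positive semidefinite, `⟪x, y⟫ = xᴴ √ρ y` is a semi-inner product, and
Cauchy–Schwarz gives `|⟨mᵢ, √ρ eᵢ⟩|² ≤ ⟨mᵢ, √ρ mᵢ⟩ ⟨eᵢ, √ρ eᵢ⟩ = (tr √ρ / d) ⟨eᵢ, √ρ eᵢ⟩`.
Summing over the orthonormal basis `e` turns the last factor into `tr √ρ`. The equality case
is read off directly from the unbiasedness condition.
-/

open Matrix
open scoped ComplexOrder

/-- The positive semidefinite square root of a positive semidefinite matrix
(the definition `Matrix.PosSemidef.sqrt` of the older Mathlib, since removed). -/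
noncomputable def Matrix.PosSemidef.sqrt {n 𝕜 : Type*} [Fintype n] [DecidableEq n] [RCLike 𝕜]
    {A : Matrix n n 𝕜} (hA : A.PosSemidef) : Matrix n n 𝕜 :=
  hA.1.eigenvectorUnitary.1 * diagonal ((↑) ∘ (√·) ∘ hA.1.eigenvalues) *
    (star hA.1.eigenvectorUnitary : Matrix n n 𝕜)

namespace Matrix

variable {n 𝕜 : Type*} [Fintype n] [RCLike 𝕜]

theorem PosSemidef.posSemidef_sqrt [DecidableEq n] {A : Matrix n n 𝕜} (hA : A.PosSemidef) :
    hA.sqrt.PosSemidef := by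
  have hD : (diagonal ((↑) ∘ (√·) ∘ hA.1.eigenvalues) : Matrix n n 𝕜).PosSemidef :=
    posSemidef_diagonal_iff.mpr fun _ => RCLike.ofReal_nonneg.mpr (Real.sqrt_nonneg _)
  simpa [PosSemidef.sqrt, star_eq_conjTranspose] using
    hD.mul_mul_conjTranspose_same hA.1.eigenvectorUnitary.1

theorem PosSemidef.norm_dotProduct_mulVec_sq_le {A : Matrix n n 𝕜} (hA : A.PosSemidef)
    (x y : n → 𝕜) :
    ‖star x ⬝ᵥ A *ᵥ y‖ ^ 2 ≤
      RCLike.re (star x ⬝ᵥ A *ᵥ x) * RCLike.re (star y ⬝ᵥ A *ᵥ y) := by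
  let _ := A.toSeminormedAddCommGroup hA
  let _ := A.toInnerProductSpace hA
  have hinner : ∀ u v : n → 𝕜, inner 𝕜 u v = star u ⬝ᵥ A *ᵥ v := fun u v => dotProduct_comm _ _
  have := inner_mul_inner_self_le (𝕜 := 𝕜) x y
  rwa [norm_inner_symm y x, ← sq, hinner, hinner, hinner] at this

theorem sum_star_dotProduct_mulVec_eq_trace [DecidableEq n] (A : Matrix n n 𝕜) (e : n → n → 𝕜)
    (he : ∀ i j, star (e i) ⬝ᵥ e j = if i = j then 1 else 0) :
    ∑ i, star (e i) ⬝ᵥ A *ᵥ e i = A.trace := by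
  set U : Matrix n n 𝕜 := (of e)ᵀ
  have hUU : U * Uᴴ = 1 := by
    refine mul_eq_one_comm.mp (ext fun i j => ?_)
    simpa [mul_apply, dotProduct, one_apply, U] using he i j
  calc ∑ i, star (e i) ⬝ᵥ A *ᵥ e i = (Uᴴ * A * U).trace := by
        refine Finset.sum_congr rfl fun i _ => ?_
        simp [mul_apply, dotProduct, mulVec, U, Finset.mul_sum, mul_assoc]
    _ = A.trace := by rw [Matrix.mul_assoc, trace_mul_comm, Matrix.mul_assoc, hUU, Matrix.mul_one]

theorem PosSemidef.sum_norm_dotProduct_mulVec_sq_le [DecidableEq n] {A : Matrix n n 𝕜}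
    (hA : A.PosSemidef) (m e : n → n → 𝕜) (c : 𝕜) (hm : ∀ i, star (m i) ⬝ᵥ A *ᵥ m i = c)
    (he : ∀ i j, star (e i) ⬝ᵥ e j = if i = j then 1 else 0) :
    ∑ i, ‖star (m i) ⬝ᵥ A *ᵥ e i‖ ^ 2 ≤ RCLike.re c * RCLike.re A.trace := by
  calc ∑ i, ‖star (m i) ⬝ᵥ A *ᵥ e i‖ ^ 2
      ≤ ∑ i, RCLike.re c * RCLike.re (star (e i) ⬝ᵥ A *ᵥ e i) :=
        Finset.sum_le_sum fun i _ => hm i ▸ hA.norm_dotProduct_mulVec_sq_le (m i) (e i)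
    _ = RCLike.re c * RCLike.re A.trace := by
        rw [← Finset.mul_sum, ← map_sum, sum_star_dotProduct_mulVec_eq_trace A e he]

end Matrix

theorem stmt_19_general (d : ℕ) (ρ : Matrix (Fin d) (Fin d) ℂ) (hρ : ρ.PosDef)
    (m : Fin d → Fin d → ℂ)
    (hub : ∀ i, star (m i) ⬝ᵥ hρ.posSemidef.sqrt *ᵥ m i = hρ.posSemidef.sqrt.trace / d) :
    (∑ i, ‖star (m i) ⬝ᵥ hρ.posSemidef.sqrt *ᵥ m i‖ ^ 2 =
        hρ.posSemidef.sqrt.trace.re ^ 2 / d) ∧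
    ∀ e : Fin d → Fin d → ℂ, (∀ i j, star (e i) ⬝ᵥ e j = if i = j then 1 else 0) →
      ∑ i, ‖star (m i) ⬝ᵥ hρ.posSemidef.sqrt *ᵥ e i‖ ^ 2 ≤
        hρ.posSemidef.sqrt.trace.re ^ 2 / d := by
  set A := hρ.posSemidef.sqrt
  have hA : A.PosSemidef := hρ.posSemidef.posSemidef_sqrt
  have hnorm : ‖A.trace‖ = A.trace.re :=
    (congrArg Complex.re (Complex.eq_coe_norm_of_nonneg hA.trace_nonneg)).symm
  refine ⟨?_, fun e he => ?_⟩
  · simp only [hub, norm_div, Complex.norm_natCast, hnorm, Finset.sum_const, Finset.card_univ,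
      Fintype.card_fin, nsmul_eq_mul]
    rcases eq_or_ne (d : ℝ) 0 with hd | hd
    · simp [hd]
    · field_simp
  · calc _ ≤ (A.trace / d).re * A.trace.re := hA.sum_norm_dotProduct_mulVec_sq_le m e _ hub he
      _ = A.trace.re ^ 2 / d := by rw [Complex.div_natCast_re]; ring

theorem stmt_19 (d : ℕ) (hd : 0 < d) (ρ : Matrix (Fin d) (Fin d) ℂ) (hρ : ρ.PosDef)
    (htr : ρ.trace = 1)
    (m : Fin d → Fin d → ℂ) (hm : ∀ i j, star (m i) ⬝ᵥ m j = if i = j then 1 else 0)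
    (hub : ∀ i, star (m i) ⬝ᵥ hρ.posSemidef.sqrt *ᵥ m i = hρ.posSemidef.sqrt.trace / d) :
    (∑ i, ‖star (m i) ⬝ᵥ hρ.posSemidef.sqrt *ᵥ m i‖ ^ 2 =
        hρ.posSemidef.sqrt.trace.re ^ 2 / d) ∧
    ∀ e : Fin d → Fin d → ℂ, (∀ i j, star (e i) ⬝ᵥ e j = if i = j then 1 else 0) →
      ∑ i, ‖star (m i) ⬝ᵥ hρ.posSemidef.sqrt *ᵥ e i‖ ^ 2 ≤
        hρ.posSemidef.sqrt.trace.re ^ 2 / d :=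
  stmt_19_general d ρ hρ m hub
end
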